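/- The set 𝒢 of central values (α,β) ∈ (0,∞)² for which the system admits a positive entire radial solution with u(0)=α, v(0)=β is downward closed: if (α₀,β₀) ∈ 𝒢 and 0 < α ≤ α₀, 0 < β ≤ β₀, then (α,β) ∈ 𝒢. -/

import Mathlib

open MeasureTheory Set Filter Topology intervalIntegral

/-- `(u, v)` is a positive entire radial solution with central values `(α, β)`. -/
def IsEntireSolution (n : ℕ) (p q : ℝ → ℝ) (f g : ℝ → ℝ → ℝ) (α β : ℝ)
    (u v : ℝ → ℝ) : Prop :=
  ContinuousOn u (Ici 0) ∧ ContinuousOn v (Ici 0) ∧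
  (∀ r ∈ Ici (0:ℝ), 0 < u r) ∧ (∀ r ∈ Ici (0:ℝ), 0 < v r) ∧
  (∀ r : ℝ, 0 ≤ r → u r = α +
    ∫ t in (0:ℝ)..r, (∫ s in (0:ℝ)..t, s ^ (n - 1) * p s * f (u s) (v s)) / t ^ (n - 1)) ∧
  (∀ r : ℝ, 0 ≤ r → v r = β +
    ∫ t in (0:ℝ)..r, (∫ s in (0:ℝ)..t, s ^ (n - 1) * q s * g (u s) (v s)) / t ^ (n - 1))

/-!
Write the system as a fixed-point problem `w = Φₐ w` for pairs `w = (u, v)`, where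
`Φₐ w = a + (T (p · f(w)), T (q · g(w)))` and `T c r = ∫₀ʳ t⁻ᵐ ∫₀ᵗ sᵐ c(s) ds dt` inverts the
radial Laplacian (`m = n - 1`). Because `f` and `g` are nonnegative and nondecreasing, `Φₐ` is
monotone in `a` and in `w` on nonnegative continuous pairs, so the solution `w₀` with data
`a₀ ≥ a` satisfies `Φₐ w₀ ≤ Φ_{a₀} w₀ = w₀`. The Picard iterates `Φₐᵏ w₀` therefore decrease
and stay above `a`; by dominated convergence (with the sources of `w₀` as dominating functions)
their pointwise limit is a fixed point of `Φₐ`, and it is continuous because it equals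
`Φₐ` of itself.
-/

theorem integrableOn_of_tendsto_of_norm_le {α E : Type*} [MeasurableSpace α] [NormedAddCommGroup E]
    {μ : Measure α} {s : Set α} (hs : MeasurableSet s) {F : ℕ → α → E} {f : α → E} {g : α → ℝ}
    (hF : ∀ k, IntegrableOn (F k) s μ) (hg : IntegrableOn g s μ)
    (hFg : ∀ k, ∀ x ∈ s, ‖F k x‖ ≤ g x)
    (hlim : ∀ x ∈ s, Tendsto (fun k => F k x) atTop (𝓝 (f x))) : IntegrableOn f s μ :=
  hg.mono' (aestronglyMeasurable_of_tendsto_ae atTop (fun k => (hF k).aestronglyMeasurable)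
      ((ae_restrict_iff' hs).2 (ae_of_all _ hlim)))
    ((ae_restrict_iff' hs).2 (ae_of_all _ fun x hx =>
      le_of_tendsto' (hlim x hx).norm fun k => hFg k x hx))

theorem tendsto_atTop_ciInf_prod {α β : Type*} [ConditionallyCompleteLattice α] [TopologicalSpace α]
    [InfConvergenceClass α] [ConditionallyCompleteLattice β] [TopologicalSpace β]
    [InfConvergenceClass β] {u : ℕ → α × β} {a : α × β} (hu : Antitone u) (ha : ∀ k, a ≤ u k) :
    Tendsto u atTop (𝓝 (⨅ k, (u k).1, ⨅ k, (u k).2)) :=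
  (tendsto_atTop_ciInf (fun _ _ h => (hu h).1)
      ⟨a.1, forall_mem_range.2 fun k => (ha k).1⟩).prodMk_nhds
    (tendsto_atTop_ciInf (fun _ _ h => (hu h).2) ⟨a.2, forall_mem_range.2 fun k => (ha k).2⟩)

noncomputable def radialSlope (m : ℕ) (c : ℝ → ℝ) (t : ℝ) : ℝ :=
  (∫ s in (0:ℝ)..t, s ^ m * c s) / t ^ m

noncomputable def radialPrimitive (m : ℕ) (c : ℝ → ℝ) (r : ℝ) : ℝ :=
  ∫ t in (0:ℝ)..r, radialSlope m c t

section Radial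

variable {m : ℕ} {c c₁ c₂ d : ℝ → ℝ} {r t : ℝ}

theorem radialSlope_nonneg (ht : 0 ≤ t) (hc : ∀ s ∈ Icc 0 t, 0 ≤ c s) :
    0 ≤ radialSlope m c t :=
  div_nonneg (integral_nonneg ht fun s hs => mul_nonneg (pow_nonneg hs.1 m) (hc s hs))
    (pow_nonneg ht m)

theorem radialPrimitive_nonneg (hr : 0 ≤ r) (hc : ∀ s ∈ Icc 0 r, 0 ≤ c s) :
    0 ≤ radialPrimitive m c r :=
  integral_nonneg hr fun _ ht => radialSlope_nonneg ht.1 fun s hs => hc s ⟨hs.1, hs.2.trans ht.2⟩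

theorem intervalIntegrable_pow_mul (ht : 0 ≤ t) (hc : IntegrableOn c (Icc 0 t)) :
    IntervalIntegrable (fun s => s ^ m * c s) volume 0 t :=
  (intervalIntegrable_iff_integrableOn_Icc_of_le ht).2 <|
    hc.continuousOn_mul (continuous_pow m).continuousOn isCompact_Icc

theorem abs_radialSlope_le (ht : 0 ≤ t) (htr : t ≤ r) (hd : IntegrableOn d (Icc 0 r))
    (hcd : ∀ s ∈ Icc 0 r, |c s| ≤ d s) : |radialSlope m c t| ≤ ∫ s in (0:ℝ)..r, d s := by
  have hd_nonneg : ∀ s ∈ Icc 0 r, 0 ≤ d s := fun s hs => (abs_nonneg _).trans (hcd s hs)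
  have hdt : IntegrableOn d (Icc 0 t) := hd.mono_set (Icc_subset_Icc_right htr)
  have hflux : |∫ s in (0:ℝ)..t, s ^ m * c s| ≤ (∫ s in (0:ℝ)..t, d s) * t ^ m := by
    rw [← intervalIntegral.integral_mul_const, ← Real.norm_eq_abs]
    refine norm_integral_le_of_norm_le ht (ae_of_all _ fun s hs => ?_) ?_
    · rw [Real.norm_eq_abs, abs_mul, abs_pow, abs_of_nonneg hs.1.le, mul_comm]
      exact mul_le_mul (hcd s ⟨hs.1.le, hs.2.trans htr⟩) (pow_le_pow_left₀ hs.1.le hs.2 m)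
        (pow_nonneg hs.1.le m) (hd_nonneg s ⟨hs.1.le, hs.2.trans htr⟩)
    · exact ((intervalIntegrable_iff_integrableOn_Icc_of_le ht).2 hdt).mul_const _
  calc |radialSlope m c t| ≤ ∫ s in (0:ℝ)..t, d s := by
        rw [radialSlope, abs_div, abs_of_nonneg (pow_nonneg ht m)]
        exact div_le_of_le_mul₀ (pow_nonneg ht m)
          (integral_nonneg ht fun s hs => hd_nonneg s ⟨hs.1, hs.2.trans htr⟩) hflux
    _ ≤ ∫ s in (0:ℝ)..r, d s :=
        integral_mono_interval le_rfl ht htr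
          ((ae_restrict_iff' measurableSet_Ioc).2 (ae_of_all _ fun s hs =>
            hd_nonneg s ⟨hs.1.le, hs.2⟩))
          ((intervalIntegrable_iff_integrableOn_Icc_of_le (ht.trans htr)).2 hd)

theorem intervalIntegrable_radialSlope (hr : 0 ≤ r) (hc : IntegrableOn c (Icc 0 r)) :
    IntervalIntegrable (radialSlope m c) volume 0 r := by
  have hflux : ContinuousOn (fun t => ∫ s in (0:ℝ)..t, s ^ m * c s) (Icc 0 r) := by
    simpa only [uIcc_of_le hr] using
      continuousOn_primitive_interval' (intervalIntegrable_pow_mul hr hc) left_mem_uIcc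
  have hmeas : AEStronglyMeasurable (radialSlope m c) (volume.restrict (Icc 0 r)) :=
    ((hflux.aestronglyMeasurable measurableSet_Icc).aemeasurable.div
      (continuous_pow m).aemeasurable).aestronglyMeasurable
  refine (intervalIntegrable_iff_integrableOn_Icc_of_le hr).2 <|
    IntegrableOn.of_bound measure_Icc_lt_top hmeas (∫ s in (0:ℝ)..r, |c s|) ?_
  exact (ae_restrict_iff' measurableSet_Icc).2 (ae_of_all _ fun t ht =>
    abs_radialSlope_le ht.1 ht.2 hc.abs fun s _ => le_rfl)

theorem radialSlope_mono (ht : 0 ≤ t) (hc₁ : IntegrableOn c₁ (Icc 0 t))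
    (hc₂ : IntegrableOn c₂ (Icc 0 t)) (h : ∀ s ∈ Icc 0 t, c₁ s ≤ c₂ s) :
    radialSlope m c₁ t ≤ radialSlope m c₂ t :=
  div_le_div_of_nonneg_right
    (integral_mono_on ht (intervalIntegrable_pow_mul ht hc₁) (intervalIntegrable_pow_mul ht hc₂)
      fun s hs => mul_le_mul_of_nonneg_left (h s hs) (pow_nonneg hs.1 m))
    (pow_nonneg ht m)

theorem radialPrimitive_mono (hr : 0 ≤ r) (hc₁ : IntegrableOn c₁ (Icc 0 r))
    (hc₂ : IntegrableOn c₂ (Icc 0 r)) (h : ∀ s ∈ Icc 0 r, c₁ s ≤ c₂ s) :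
    radialPrimitive m c₁ r ≤ radialPrimitive m c₂ r :=
  integral_mono_on hr (intervalIntegrable_radialSlope hr hc₁)
    (intervalIntegrable_radialSlope hr hc₂)
    fun _ ht => radialSlope_mono ht.1 (hc₁.mono_set (Icc_subset_Icc_right ht.2))
      (hc₂.mono_set (Icc_subset_Icc_right ht.2)) fun s hs => h s ⟨hs.1, hs.2.trans ht.2⟩

theorem continuousOn_radialPrimitive (hc : ∀ r, IntegrableOn c (Icc 0 r)) :
    ContinuousOn (radialPrimitive m c) (Ici 0) := by
  intro x hx
  have hx1 : (0:ℝ) ≤ x + 1 := by linarith [mem_Ici.1 hx]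
  have hIcc : ContinuousOn (radialPrimitive m c) (Icc 0 (x + 1)) := by
    have h := continuousOn_primitive_interval'
      (intervalIntegrable_radialSlope (m := m) hx1 (hc (x + 1))) left_mem_uIcc
    rwa [uIcc_of_le hx1] at h
  refine (hIcc x ⟨hx, by linarith⟩).mono_of_mem_nhdsWithin ?_
  exact mem_nhdsWithin.2 ⟨Iio (x + 1), isOpen_Iio, by simp, fun y hy => ⟨hy.2, hy.1.le⟩⟩

theorem tendsto_radialSlope {F : ℕ → ℝ → ℝ} (ht : 0 ≤ t)
    (hF : ∀ k, IntegrableOn (F k) (Icc 0 t)) (hd : IntegrableOn d (Icc 0 t))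
    (hFd : ∀ k, ∀ s ∈ Icc 0 t, |F k s| ≤ d s)
    (hlim : ∀ s ∈ Icc 0 t, Tendsto (fun k => F k s) atTop (𝓝 (c s))) :
    Tendsto (fun k => radialSlope m (F k) t) atTop (𝓝 (radialSlope m c t)) := by
  refine Tendsto.div_const ?_ _
  refine tendsto_integral_filter_of_dominated_convergence (fun s => s ^ m * d s)
    (Eventually.of_forall fun k => (intervalIntegrable_pow_mul ht (hF k)).def'.aestronglyMeasurable)
    (Eventually.of_forall fun k => ae_of_all _ fun s hs => ?_) (intervalIntegrable_pow_mul ht hd)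
    (ae_of_all _ fun s hs => ?_)
  · rw [uIoc_of_le ht] at hs
    rw [Real.norm_eq_abs, abs_mul, abs_pow, abs_of_nonneg hs.1.le]
    exact mul_le_mul_of_nonneg_left (hFd k s ⟨hs.1.le, hs.2⟩) (pow_nonneg hs.1.le m)
  · rw [uIoc_of_le ht] at hs
    exact (hlim s ⟨hs.1.le, hs.2⟩).const_mul _

theorem tendsto_radialPrimitive {F : ℕ → ℝ → ℝ} (hr : 0 ≤ r)
    (hF : ∀ k, IntegrableOn (F k) (Icc 0 r)) (hd : IntegrableOn d (Icc 0 r))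
    (hFd : ∀ k, ∀ s ∈ Icc 0 r, |F k s| ≤ d s)
    (hlim : ∀ s ∈ Icc 0 r, Tendsto (fun k => F k s) atTop (𝓝 (c s))) :
    Tendsto (fun k => radialPrimitive m (F k) r) atTop (𝓝 (radialPrimitive m c r)) := by
  refine tendsto_integral_filter_of_dominated_convergence (fun _ => ∫ s in (0:ℝ)..r, d s)
    (Eventually.of_forall fun k =>
      (intervalIntegrable_radialSlope hr (hF k)).def'.aestronglyMeasurable)
    (Eventually.of_forall fun k => ae_of_all _ fun t ht => ?_) intervalIntegrable_const
    (ae_of_all _ fun t ht => ?_) <;> rw [uIoc_of_le hr] at ht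
  · exact abs_radialSlope_le ht.1.le ht.2 hd (hFd k)
  · have hsub : Icc 0 t ⊆ Icc 0 r := Icc_subset_Icc_right ht.2
    exact tendsto_radialSlope ht.1.le (fun k => (hF k).mono_set hsub) (hd.mono_set hsub)
      (fun k s hs => hFd k s (hsub hs)) fun s hs => hlim s (hsub hs)

end Radial

structure IsMonotoneSource (p : ℝ → ℝ) (f : ℝ → ℝ → ℝ) : Prop where
  continuousOn_coeff : ContinuousOn p (Ici 0)
  coeff_nonneg : ∀ r ∈ Ici (0:ℝ), 0 ≤ p r
  continuous : Continuous fun x : ℝ × ℝ => f x.1 x.2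
  nonneg : ∀ s t : ℝ, 0 ≤ s → 0 ≤ t → 0 ≤ f s t
  mono : ∀ s t s' t' : ℝ, 0 ≤ s → 0 ≤ t → s ≤ s' → t ≤ t' → f s t ≤ f s' t'

def source (p : ℝ → ℝ) (f : ℝ → ℝ → ℝ) (w : ℝ → ℝ × ℝ) (s : ℝ) : ℝ :=
  p s * f (w s).1 (w s).2

namespace IsMonotoneSource

variable {m : ℕ} {p : ℝ → ℝ} {f : ℝ → ℝ → ℝ} {w w' v : ℝ → ℝ × ℝ} {W : ℕ → ℝ → ℝ × ℝ} {r s : ℝ}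

theorem source_nonneg (hS : IsMonotoneSource p f) (hs : 0 ≤ s) (hw : 0 ≤ w s) :
    0 ≤ source p f w s :=
  mul_nonneg (hS.coeff_nonneg s hs) (hS.nonneg _ _ hw.1 hw.2)

theorem source_mono (hS : IsMonotoneSource p f) (hs : 0 ≤ s) (hw : 0 ≤ w s) (h : w s ≤ w' s) :
    source p f w s ≤ source p f w' s :=
  mul_le_mul_of_nonneg_left (hS.mono _ _ _ _ hw.1 hw.2 h.1 h.2) (hS.coeff_nonneg s hs)

theorem abs_source_le (hS : IsMonotoneSource p f) (hs : 0 ≤ s) (hw : 0 ≤ w s) (h : w s ≤ w' s) :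
    |source p f w s| ≤ source p f w' s := by
  rw [abs_of_nonneg (hS.source_nonneg hs hw)]
  exact hS.source_mono hs hw h

theorem integrableOn_source (hS : IsMonotoneSource p f) (hw : ContinuousOn w (Ici 0)) (r : ℝ) :
    IntegrableOn (source p f w) (Icc 0 r) :=
  ((hS.continuousOn_coeff.mul (hS.continuous.comp_continuousOn hw)).mono
    Icc_subset_Ici_self).integrableOn_Icc

theorem tendsto_source (hS : IsMonotoneSource p f)
    (h : Tendsto (fun k => W k s) atTop (𝓝 (v s))) :
    Tendsto (fun k => source p f (W k) s) atTop (𝓝 (source p f v s)) :=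
  ((hS.continuous.tendsto _).comp h).const_mul (p s)

theorem integrableOn_source_of_tendsto (hS : IsMonotoneSource p f)
    (hW : ∀ k, ContinuousOn (W k) (Ici 0)) (hW_nonneg : ∀ k, ∀ s ∈ Ici (0:ℝ), 0 ≤ W k s)
    (hW_le : ∀ k, ∀ s ∈ Ici (0:ℝ), W k s ≤ W 0 s)
    (hlim : ∀ s ∈ Ici (0:ℝ), Tendsto (fun k => W k s) atTop (𝓝 (v s))) (r : ℝ) :
    IntegrableOn (source p f v) (Icc 0 r) :=
  integrableOn_of_tendsto_of_norm_le measurableSet_Icc (fun k => hS.integrableOn_source (hW k) r)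
    (hS.integrableOn_source (hW 0) r)
    (fun k s hs => hS.abs_source_le hs.1 (hW_nonneg k s hs.1) (hW_le k s hs.1))
    fun s hs => hS.tendsto_source (hlim s hs.1)

theorem tendsto_radialPrimitive_source (hS : IsMonotoneSource p f)
    (hW : ∀ k, ContinuousOn (W k) (Ici 0)) (hW_nonneg : ∀ k, ∀ s ∈ Ici (0:ℝ), 0 ≤ W k s)
    (hW_le : ∀ k, ∀ s ∈ Ici (0:ℝ), W k s ≤ W 0 s)
    (hlim : ∀ s ∈ Ici (0:ℝ), Tendsto (fun k => W k s) atTop (𝓝 (v s))) (hr : 0 ≤ r) :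
    Tendsto (fun k => radialPrimitive m (source p f (W k)) r) atTop
      (𝓝 (radialPrimitive m (source p f v) r)) :=
  tendsto_radialPrimitive hr (fun k => hS.integrableOn_source (hW k) r)
    (hS.integrableOn_source (hW 0) r)
    (fun k s hs => hS.abs_source_le hs.1 (hW_nonneg k s hs.1) (hW_le k s hs.1))
    fun s hs => hS.tendsto_source (hlim s hs.1)

end IsMonotoneSource

noncomputable def picardMap (m : ℕ) (p q : ℝ → ℝ) (f g : ℝ → ℝ → ℝ) (a : ℝ × ℝ)
    (w : ℝ → ℝ × ℝ) (r : ℝ) : ℝ × ℝ :=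
  a + (radialPrimitive m (source p f w) r, radialPrimitive m (source q g w) r)

section Picard

variable {m : ℕ} {p q : ℝ → ℝ} {f g : ℝ → ℝ → ℝ} {a a' : ℝ × ℝ} {w w' v : ℝ → ℝ × ℝ} {r : ℝ}

theorem continuousOn_picardMap (hf : ∀ r, IntegrableOn (source p f w) (Icc 0 r))
    (hg : ∀ r, IntegrableOn (source q g w) (Icc 0 r)) :
    ContinuousOn (picardMap m p q f g a w) (Ici 0) :=
  continuousOn_const.add
    ((continuousOn_radialPrimitive hf).prodMk (continuousOn_radialPrimitive hg))

theorem le_picardMap (hS : IsMonotoneSource p f) (hT : IsMonotoneSource q g)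
    (hw : ∀ s ∈ Ici (0:ℝ), 0 ≤ w s) (hr : 0 ≤ r) : a ≤ picardMap m p q f g a w r :=
  le_add_of_nonneg_right
    ⟨radialPrimitive_nonneg hr fun s hs => hS.source_nonneg hs.1 (hw s hs.1),
      radialPrimitive_nonneg hr fun s hs => hT.source_nonneg hs.1 (hw s hs.1)⟩

theorem picardMap_mono (hS : IsMonotoneSource p f) (hT : IsMonotoneSource q g) (ha : a ≤ a')
    (hw : ContinuousOn w (Ici 0)) (hw' : ContinuousOn w' (Ici 0))
    (hw_nonneg : ∀ s ∈ Ici (0:ℝ), 0 ≤ w s) (hle : ∀ s ∈ Ici (0:ℝ), w s ≤ w' s) (hr : 0 ≤ r) :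
    picardMap m p q f g a w r ≤ picardMap m p q f g a' w' r :=
  add_le_add ha
    ⟨radialPrimitive_mono hr (hS.integrableOn_source hw r) (hS.integrableOn_source hw' r)
        fun s hs => hS.source_mono hs.1 (hw_nonneg s hs.1) (hle s hs.1),
      radialPrimitive_mono hr (hT.integrableOn_source hw r) (hT.integrableOn_source hw' r)
        fun s hs => hT.source_mono hs.1 (hw_nonneg s hs.1) (hle s hs.1)⟩

theorem tendsto_picardMap (hS : IsMonotoneSource p f) (hT : IsMonotoneSource q g)
    {W : ℕ → ℝ → ℝ × ℝ} (hW : ∀ k, ContinuousOn (W k) (Ici 0))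
    (hW_nonneg : ∀ k, ∀ s ∈ Ici (0:ℝ), 0 ≤ W k s) (hW_le : ∀ k, ∀ s ∈ Ici (0:ℝ), W k s ≤ W 0 s)
    (hlim : ∀ s ∈ Ici (0:ℝ), Tendsto (fun k => W k s) atTop (𝓝 (v s))) (hr : 0 ≤ r) :
    Tendsto (fun k => picardMap m p q f g a (W k) r) atTop (𝓝 (picardMap m p q f g a v r)) :=
  tendsto_const_nhds.add
    ((hS.tendsto_radialPrimitive_source hW hW_nonneg hW_le hlim hr).prodMk_nhds
      (hT.tendsto_radialPrimitive_source hW hW_nonneg hW_le hlim hr))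

theorem picardMap_iterate_spec (hS : IsMonotoneSource p f) (hT : IsMonotoneSource q g)
    {a₀ : ℝ × ℝ} {w₀ : ℝ → ℝ × ℝ} (ha : 0 ≤ a) (haa₀ : a ≤ a₀) (hw₀ : ContinuousOn w₀ (Ici 0))
    (hw₀_nonneg : ∀ s ∈ Ici (0:ℝ), 0 ≤ w₀ s)
    (hfix : ∀ r ∈ Ici (0:ℝ), picardMap m p q f g a₀ w₀ r = w₀ r) (k : ℕ) :
    ContinuousOn ((picardMap m p q f g a)^[k] w₀) (Ici 0) ∧
      ∀ r ∈ Ici (0:ℝ), a ≤ (picardMap m p q f g a)^[k] w₀ r ∧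
        (picardMap m p q f g a)^[k + 1] w₀ r ≤ (picardMap m p q f g a)^[k] w₀ r := by
  induction k with
  | zero =>
    refine ⟨hw₀, fun r hr => ⟨?_, ?_⟩⟩
    · rw [Function.iterate_zero_apply, ← hfix r hr]
      exact haa₀.trans (le_picardMap hS hT hw₀_nonneg hr)
    · rw [Function.iterate_one, Function.iterate_zero_apply, ← hfix r hr]
      exact picardMap_mono hS hT haa₀ hw₀ hw₀ hw₀_nonneg (fun _ _ => le_rfl) hr
  | succ k ih =>
    obtain ⟨hcont, hspec⟩ := ih
    rw [Function.iterate_succ_apply'] at hspec ⊢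
    set w := (picardMap m p q f g a)^[k] w₀
    have hcont' : ContinuousOn (picardMap m p q f g a w) (Ici 0) :=
      continuousOn_picardMap (hS.integrableOn_source hcont) (hT.integrableOn_source hcont)
    have hlow : ∀ r ∈ Ici (0:ℝ), a ≤ picardMap m p q f g a w r := fun r hr =>
      le_picardMap hS hT (fun s hs => ha.trans (hspec s hs).1) hr
    refine ⟨hcont', fun r hr => ⟨hlow r hr, ?_⟩⟩
    rw [Function.iterate_succ_apply', Function.iterate_succ_apply']
    exact picardMap_mono hS hT le_rfl hcont' hcont (fun s hs => ha.trans (hlow s hs))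
      (fun s hs => (hspec s hs).2) hr

theorem exists_fixedPoint_picardMap (hS : IsMonotoneSource p f) (hT : IsMonotoneSource q g)
    {a₀ : ℝ × ℝ} {w₀ : ℝ → ℝ × ℝ} (ha : 0 ≤ a) (haa₀ : a ≤ a₀) (hw₀ : ContinuousOn w₀ (Ici 0))
    (hw₀_nonneg : ∀ s ∈ Ici (0:ℝ), 0 ≤ w₀ s)
    (hfix : ∀ r ∈ Ici (0:ℝ), picardMap m p q f g a₀ w₀ r = w₀ r) :
    ∃ w : ℝ → ℝ × ℝ, ContinuousOn w (Ici 0) ∧ (∀ r ∈ Ici (0:ℝ), a ≤ w r) ∧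
      ∀ r ∈ Ici (0:ℝ), picardMap m p q f g a w r = w r := by
  set W : ℕ → ℝ → ℝ × ℝ := fun k => (picardMap m p q f g a)^[k] w₀
  set v : ℝ → ℝ × ℝ := fun r => (⨅ k, (W k r).1, ⨅ k, (W k r).2)
  have hspec := picardMap_iterate_spec hS hT ha haa₀ hw₀ hw₀_nonneg hfix
  have hW : ∀ k, ContinuousOn (W k) (Ici 0) := fun k => (hspec k).1
  have hW_succ : ∀ k, W (k + 1) = picardMap m p q f g a (W k) := fun k =>
    Function.iterate_succ_apply' _ _ _
  have hanti : ∀ r ∈ Ici (0:ℝ), Antitone fun k => W k r := fun r hr =>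
    antitone_nat_of_succ_le fun k => ((hspec k).2 r hr).2
  have hW_nonneg : ∀ k, ∀ s ∈ Ici (0:ℝ), 0 ≤ W k s := fun k s hs =>
    ha.trans ((hspec k).2 s hs).1
  have hW_le : ∀ k, ∀ s ∈ Ici (0:ℝ), W k s ≤ W 0 s := fun k s hs => hanti s hs (Nat.zero_le k)
  have hlim : ∀ r ∈ Ici (0:ℝ), Tendsto (fun k => W k r) atTop (𝓝 (v r)) := fun r hr =>
    tendsto_atTop_ciInf_prod (hanti r hr) fun k => ((hspec k).2 r hr).1
  have hv_fix : ∀ r ∈ Ici (0:ℝ), picardMap m p q f g a v r = v r := by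
    intro r hr
    have h := tendsto_picardMap (m := m) (a := a) (W := W) hS hT hW hW_nonneg hW_le hlim hr
    simp only [← hW_succ] at h
    exact tendsto_nhds_unique h ((hlim r hr).comp (tendsto_add_atTop_nat 1))
  refine ⟨v, ?_, fun r hr => ge_of_tendsto' (hlim r hr) fun k => ((hspec k).2 r hr).1, hv_fix⟩
  exact (continuousOn_picardMap (hS.integrableOn_source_of_tendsto hW hW_nonneg hW_le hlim)
    (hT.integrableOn_source_of_tendsto hW hW_nonneg hW_le hlim)).congr
      fun r hr => (hv_fix r hr).symm

end Picard

theorem isEntireSolution_iff {n : ℕ} {p q : ℝ → ℝ} {f g : ℝ → ℝ → ℝ} {α β : ℝ} {u v : ℝ → ℝ} :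
    IsEntireSolution n p q f g α β u v ↔
      ContinuousOn (fun r => (u r, v r)) (Ici 0) ∧ (∀ r ∈ Ici (0:ℝ), 0 < u r ∧ 0 < v r) ∧
        ∀ r ∈ Ici (0:ℝ), picardMap (n - 1) p q f g (α, β) (fun r => (u r, v r)) r = (u r, v r) := by
  have hform : ∀ (c : ℝ → ℝ) (h : ℝ → ℝ → ℝ) (r : ℝ),
      (∫ t in (0:ℝ)..r, (∫ s in (0:ℝ)..t, s ^ (n - 1) * c s * h (u s) (v s)) / t ^ (n - 1)) =
        radialPrimitive (n - 1) (source c h fun r => (u r, v r)) r := fun c h r => by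
    simp only [radialPrimitive, radialSlope, source, mul_assoc]
  simp only [IsEntireSolution, hform, picardMap, Prod.ext_iff, Prod.fst_add, Prod.snd_add, mem_Ici]
  constructor
  · rintro ⟨hu, hv, hu_pos, hv_pos, hu_eq, hv_eq⟩
    exact ⟨hu.prodMk hv, fun r hr => ⟨hu_pos r hr, hv_pos r hr⟩,
      fun r hr => ⟨(hu_eq r hr).symm, (hv_eq r hr).symm⟩⟩
  · rintro ⟨huv, hpos, heq⟩
    exact ⟨huv.fst, huv.snd, fun r hr => (hpos r hr).1, fun r hr => (hpos r hr).2,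
      fun r hr => (heq r hr).1.symm, fun r hr => (heq r hr).2.symm⟩

theorem stmt11_general (n : ℕ)
    (p q : ℝ → ℝ)
    (hp_cont : ContinuousOn p (Ici 0)) (hq_cont : ContinuousOn q (Ici 0))
    (hp_nonneg : ∀ r ∈ Ici (0:ℝ), 0 ≤ p r) (hq_nonneg : ∀ r ∈ Ici (0:ℝ), 0 ≤ q r)
    (f g : ℝ → ℝ → ℝ)
    (hf_cont : Continuous fun x : ℝ × ℝ => f x.1 x.2)
    (hg_cont : Continuous fun x : ℝ × ℝ => g x.1 x.2)
    (hf_nonneg : ∀ s t : ℝ, 0 ≤ s → 0 ≤ t → 0 ≤ f s t)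
    (hg_nonneg : ∀ s t : ℝ, 0 ≤ s → 0 ≤ t → 0 ≤ g s t)
    (hf_mono : ∀ s t s' t' : ℝ, 0 ≤ s → 0 ≤ t → s ≤ s' → t ≤ t' → f s t ≤ f s' t')
    (hg_mono : ∀ s t s' t' : ℝ, 0 ≤ s → 0 ≤ t → s ≤ s' → t ≤ t' → g s t ≤ g s' t')
    (G : Set (ℝ × ℝ))
    (hG : G = {ab : ℝ × ℝ | 0 < ab.1 ∧ 0 < ab.2 ∧
      ∃ u v : ℝ → ℝ, IsEntireSolution n p q f g ab.1 ab.2 u v}) :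
    ∀ α₀ β₀ α β : ℝ, (α₀, β₀) ∈ G → 0 < α → α ≤ α₀ → 0 < β → β ≤ β₀ →
      (α, β) ∈ G := by
  subst hG
  rintro α₀ β₀ α β ⟨-, -, u₀, v₀, hsol⟩ hα hαα₀ hβ hββ₀
  obtain ⟨hcont, hpos, hfix⟩ := isEntireSolution_iff.1 hsol
  obtain ⟨w, hw, hw_ge, hw_fix⟩ := exists_fixedPoint_picardMap
    ⟨hp_cont, hp_nonneg, hf_cont, hf_nonneg, hf_mono⟩
    ⟨hq_cont, hq_nonneg, hg_cont, hg_nonneg, hg_mono⟩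
    (show (0 : ℝ × ℝ) ≤ (α, β) from ⟨hα.le, hβ.le⟩)
    (show ((α, β) : ℝ × ℝ) ≤ (α₀, β₀) from ⟨hαα₀, hββ₀⟩)
    hcont (fun s hs => ⟨(hpos s hs).1.le, (hpos s hs).2.le⟩) hfix
  refine ⟨hα, hβ, fun r => (w r).1, fun r => (w r).2, isEntireSolution_iff.2 ⟨hw, ?_, hw_fix⟩⟩
  exact fun r hr => ⟨hα.trans_le (hw_ge r hr).1, hβ.trans_le (hw_ge r hr).2⟩

theorem stmt11 (n : ℕ) (hn : 3 ≤ n)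
    (p q : ℝ → ℝ)
    (hp_cont : ContinuousOn p (Ici 0)) (hq_cont : ContinuousOn q (Ici 0))
    (hp_nonneg : ∀ r ∈ Ici (0:ℝ), 0 ≤ p r) (hq_nonneg : ∀ r ∈ Ici (0:ℝ), 0 ≤ q r)
    (f g : ℝ → ℝ → ℝ)
    (hf_cont : Continuous fun x : ℝ × ℝ => f x.1 x.2)
    (hg_cont : Continuous fun x : ℝ × ℝ => g x.1 x.2)
    (hf_nonneg : ∀ s t : ℝ, 0 ≤ s → 0 ≤ t → 0 ≤ f s t)
    (hg_nonneg : ∀ s t : ℝ, 0 ≤ s → 0 ≤ t → 0 ≤ g s t)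
    (hf_mono : ∀ s t s' t' : ℝ, 0 ≤ s → 0 ≤ t → s ≤ s' → t ≤ t' → f s t ≤ f s' t')
    (hg_mono : ∀ s t s' t' : ℝ, 0 ≤ s → 0 ≤ t → s ≤ s' → t ≤ t' → g s t ≤ g s' t')
    (G : Set (ℝ × ℝ))
    (hG : G = {ab : ℝ × ℝ | 0 < ab.1 ∧ 0 < ab.2 ∧
      ∃ u v : ℝ → ℝ, IsEntireSolution n p q f g ab.1 ab.2 u v}) :
    ∀ α₀ β₀ α β : ℝ, (α₀, β₀) ∈ G → 0 < α → α ≤ α₀ → 0 < β → β ≤ β₀ →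
      (α, β) ∈ G :=
  stmt11_general n p q hp_cont hq_cont hp_nonneg hq_nonneg f g hf_cont hg_cont hf_nonneg hg_nonneg
    hf_mono hg_mono G hG
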